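/- arXiv:1405.6049 — 6 statements merged into one kernel-verified Lean document; each statement's English description precedes it below -/
import Mathlib

section
/- Let m ≥ 2 be an integer and t, L₁, L₂, ε positive reals with L₁ ≥ L₂ and ε ≤ m·t·L₂. Set X = 4·e·m·t·L₂/ε, let k = max(1, round(√((1/2)·log_{25/3} X))), and set d_k = m·(4/3)·k·(5/3)^{k−1}. Then (2m−1)·5^{k−1}·L₁·t·X^{1/(2k)}·(4·m·e/3)·(5/3)^{k−1} ≤ (8/3)·(2m−1)·m·e·t·L₁·exp(2·√((1/2)·ln(25/3)·ln X)). -/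
/-!
Write `a = log(25/3)`, `L = log X` and `s = √(L / 2a)`. Up to constants the left-hand side is
`(25/3)^(k-1) · X^(1/2k) = exp (a · (k - 1 + s² / k))`, and `k - 1 + s²/k = 2s - 1 + (k - s)²/k`
is at most `2s` as soon as `(k - s)² ≤ k`, which holds for `k` the rounding of `s` (clamped to
`k ≥ 1`). Since `a · 2s = 2√(a L / 2)`, this gives the bound, even with a spare factor `2`.
-/

open Real

lemma sq_sub_le_of_eq_max_one_round {s : ℝ} (hs : 0 ≤ s) {k : ℕ}
    (hk : k = max 1 (round s).toNat) : ((k : ℝ) - s) ^ 2 ≤ k := by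
  have hround : |s - round s| ≤ 1 / 2 := abs_sub_round s
  obtain ⟨hlo, hhi⟩ := abs_le.mp hround
  rcases le_or_gt 1 (round s) with hr | hr
  · have hkr : (k : ℤ) = round s := by omega
    have hkr' : (k : ℝ) = round s := by exact_mod_cast hkr
    have h1 : (1 : ℝ) ≤ round s := by exact_mod_cast hr
    rw [hkr']
    nlinarith
  · have hk1 : k = 1 := by omega
    have hr0 : (round s : ℝ) ≤ 0 := by exact_mod_cast (by omega : round s ≤ 0)
    subst hk1
    push_cast
    nlinarith

lemma sub_one_add_sq_div_le_two_mul {k s : ℝ} (hk : 0 < k) (hks : (k - s) ^ 2 ≤ k) :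
    k - 1 + s ^ 2 / k ≤ 2 * s := by
  have hdiff : k - 1 + s ^ 2 / k - 2 * s = ((k - s) ^ 2 - k) / k := by
    field_simp
    ring
  have : ((k - s) ^ 2 - k) / k ≤ 0 := div_nonpos_of_nonpos_of_nonneg (by linarith) hk.le
  linarith

lemma pow_mul_rpow_le_exp_two_mul_sqrt {b X : ℝ} (hb : 1 < b) (hX : 1 ≤ X) {k : ℕ} (hk : 0 < k)
    (hks : ((k : ℝ) - √((1 / 2) * logb b X)) ^ 2 ≤ k) :
    b ^ (k - 1) * X ^ ((1 : ℝ) / (2 * k)) ≤ exp (2 * √((1 / 2) * log b * log X)) := by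
  set a := log b
  set L := log X
  set s := √((1 / 2) * logb b X)
  have ha : 0 < a := log_pos hb
  have hL : 0 ≤ L := log_nonneg hX
  have hk0 : (0 : ℝ) < k := by exact_mod_cast hk
  have hs : s ^ 2 = L / (2 * a) := by
    rw [sq_sqrt (by unfold logb; positivity), logb]
    ring
  have hsqrt : √((1 / 2) * a * L) = a * s := by
    rw [show (1 / 2) * a * L = (a * s) ^ 2 by rw [mul_pow, hs]; field_simp]
    exact sqrt_sq (by positivity)
  have hpow : b ^ (k - 1) = exp (((k : ℝ) - 1) * a) := by
    rw [← rpow_natCast, rpow_def_of_pos (by linarith), Nat.cast_sub hk, Nat.cast_one, mul_comm]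
  have hrpow : X ^ ((1 : ℝ) / (2 * k)) = exp (a * (s ^ 2 / k)) := by
    rw [rpow_def_of_pos (by linarith)]
    change exp (L * _) = _
    rw [hs]
    congr 1
    field_simp
  have hexponent : ((k : ℝ) - 1) * a + a * (s ^ 2 / k) ≤ 2 * (a * s) := by
    have := mul_le_mul_of_nonneg_left (sub_one_add_sq_div_le_two_mul hk0 hks) ha.le
    linarith
  rw [hpow, hrpow, ← exp_add, hsqrt]
  exact exp_le_exp.mpr hexponent

theorem nexp_bound_general (m : ℕ) (t L1 L2 ε : ℝ)
    (ht : 0 < t) (hL1 : 0 < L1) (hε : 0 < ε)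
    (hεle : ε ≤ (m : ℝ) * t * L2)
    (X : ℝ) (hX : X = 4 * Real.exp 1 * m * t * L2 / ε)
    (k : ℕ) (hk : k = max 1 (round (Real.sqrt ((1 / 2) * Real.logb (25 / 3) X))).toNat) :
    ((2 * m - 1 : ℝ)) * 5 ^ (k - 1) * L1 * t * X ^ ((1 : ℝ) / (2 * k)) *
        (4 * m * Real.exp 1 / 3) * (5 / 3) ^ (k - 1)
      ≤ (8 / 3) * (2 * m - 1 : ℝ) * m * Real.exp 1 * t * L1 *
        Real.exp (2 * Real.sqrt ((1 / 2) * Real.log (25 / 3) * Real.log X)) := by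
  have hX1 : 1 ≤ X := by
    rw [hX, le_div_iff₀ hε, one_mul]
    nlinarith [add_one_le_exp (1 : ℝ)]
  have hk0 : 0 < k := by omega
  have hmain := pow_mul_rpow_le_exp_two_mul_sqrt (by norm_num) hX1 hk0
    (sq_sub_le_of_eq_max_one_round (sqrt_nonneg _) hk)
  have hm_nonneg : 0 ≤ (2 * (m : ℝ) - 1) * m := by
    rcases Nat.eq_zero_or_pos m with rfl | hm
    · simp
    · have : (1 : ℝ) ≤ m := by exact_mod_cast hm
      nlinarith
  have hC : 0 ≤ (4 / 3) * ((2 * m - 1) * m) * exp 1 * t * L1 := by positivity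
  calc ((2 * m - 1 : ℝ)) * 5 ^ (k - 1) * L1 * t * X ^ ((1 : ℝ) / (2 * k)) *
        (4 * m * exp 1 / 3) * (5 / 3) ^ (k - 1)
      = (4 / 3) * ((2 * m - 1) * m) * exp 1 * t * L1 *
          ((25 / 3) ^ (k - 1) * X ^ ((1 : ℝ) / (2 * k))) := by
        rw [show (25 / 3 : ℝ) = 5 * (5 / 3) by norm_num, mul_pow]
        ring
    _ ≤ (4 / 3) * ((2 * m - 1) * m) * exp 1 * t * L1 *
          exp (2 * √((1 / 2) * log (25 / 3) * log X)) := mul_le_mul_of_nonneg_left hmain hC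
    _ ≤ _ := by nlinarith [exp_pos (2 * √((1 / 2) * log (25 / 3) * log X))]

/-- The paper's bound on the number of exponentials: with
`X = 4emtL₂/ε`, `k = max(1, round(√((1/2)·log_{25/3} X)))` and
`d_k = m·(4/3)·k·(5/3)^{k−1}`, the general upper bound on `N_exp` is at most
`(8/3)(2m−1)m·e·t·L₁·exp(2√((1/2)·ln(25/3)·ln X))`. -/
theorem nexp_bound (m : ℕ) (hm : 2 ≤ m) (t L1 L2 ε : ℝ)
    (ht : 0 < t) (hL1 : 0 < L1) (hL2 : 0 < L2) (hε : 0 < ε)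
    (hL12 : L2 ≤ L1) (hεle : ε ≤ (m : ℝ) * t * L2)
    (X : ℝ) (hX : X = 4 * Real.exp 1 * m * t * L2 / ε)
    (k : ℕ) (hk : k = max 1 (round (Real.sqrt ((1 / 2) * Real.logb (25 / 3) X))).toNat)
    (dk : ℝ) (hdk : dk = (m : ℝ) * (4 / 3) * k * (5 / 3) ^ (k - 1)) :
    ((2 * m - 1 : ℝ)) * 5 ^ (k - 1) * L1 * t * X ^ ((1 : ℝ) / (2 * k)) *
        (4 * m * Real.exp 1 / 3) * (5 / 3) ^ (k - 1)
      ≤ (8 / 3) * (2 * m - 1 : ℝ) * m * Real.exp 1 * t * L1 *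
        Real.exp (2 * Real.sqrt ((1 / 2) * Real.log (25 / 3) * Real.log X)) :=
  nexp_bound_general m t L1 L2 ε ht hL1 hε hεle X hX k hk
end

section
/- Let A and B be n×n positive definite complex matrices, and let S = { C : n×n complex matrix | fromBlocks A C Cᴴ B is positive semidefinite }. Then S is a convex set (over ℝ), and every extreme point C of S satisfies C = √A · U · √B for some unitary n×n matrix U. -/
/-!
Write `C = √A K √B`. The block matrix is then congruent, via `diag(√A, √B)`, to
`fromBlocks 1 K Kᴴ 1`, so by the Schur complement it is positive semidefinite iff `K` is a
contraction. Since `K ↦ √A K √B` is a real-linear bijection, the extreme points `C` come from the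
extreme contractions `K`, and convexity is clear because `C ↦ fromBlocks A C Cᴴ B` is affine.

An extreme contraction `K` is first a partial isometry: `0 ≤ 1 - KᴴK ≤ 1`, so both
`K ± ½ K (1 - KᴴK)` remain contractions and hence `K (1 - KᴴK) = 0`. Then
`K ± (1 - KKᴴ) X (1 - KᴴK)` is a contraction for every contraction `X`, which forces
`(1 - KKᴴ) X (1 - KᴴK) = 0`; taking for `X` the matrix units shows that `1 - KKᴴ = 0` or
`1 - KᴴK = 0`, i.e. `K` is unitary.
-/

open Matrix
open scoped ComplexOrder

/-- The positive semidefinite square root of a positive semidefinite matrix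
(the definition `Matrix.PosSemidef.sqrt` of the older Mathlib, since removed). -/
noncomputable def Matrix.PosSemidef.sqrt {n 𝕜 : Type*} [Fintype n] [RCLike 𝕜] [DecidableEq n]
    {A : Matrix n n 𝕜} (hA : A.PosSemidef) : Matrix n n 𝕜 :=
  hA.1.eigenvectorUnitary.1 * diagonal ((↑) ∘ (√·) ∘ hA.1.eigenvalues) *
  (star hA.1.eigenvectorUnitary : Matrix n n 𝕜)

theorem eq_zero_of_mem_extremePoints_of_add_mem_of_sub_mem {𝕜 E : Type*} [Field 𝕜]
    [LinearOrder 𝕜] [IsStrictOrderedRing 𝕜] [AddCommGroup E] [Module 𝕜 E] {s : Set E}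
    {x w : E} (hx : x ∈ s.extremePoints 𝕜) (h₁ : x + w ∈ s) (h₂ : x - w ∈ s) : w = 0 := by
  have hseg : x ∈ openSegment 𝕜 (x + w) (x - w) :=
    ⟨2⁻¹, 2⁻¹, by norm_num, by norm_num, by norm_num, by module⟩
  simpa using hx.2 h₁ h₂ hseg

namespace Matrix

theorem eq_zero_or_eq_zero_of_forall_mul_single_mul_eq_zero {l m n α : Type*} [Fintype m]
    [DecidableEq m] [Semiring α] [NoZeroDivisors α] {P : Matrix l m α} {N : Matrix m n α}
    (h : ∀ k k', P * (single k k' 1 : Matrix m m α) * N = 0) : P = 0 ∨ N = 0 := by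
  by_contra! hPN
  obtain ⟨i, k, hik⟩ : ∃ i k, P i k ≠ 0 := by
    by_contra! hP
    exact hPN.1 (ext hP)
  obtain ⟨k', j, hkj⟩ : ∃ k' j, N k' j ≠ 0 := by
    by_contra! hN
    exact hPN.2 (ext hN)
  have hentry : (P * (single k k' 1 : Matrix m m α) * N) i j = P i k * N k' j := by
    rw [mul_apply, Finset.sum_eq_single k' (fun x _ hx => by simp [hx]) (by simp),
      mul_single_apply_same, mul_one]
  exact mul_ne_zero hik hkj (hentry ▸ congr_fun₂ (h k k') i j)

variable {m n 𝕜 : Type*} [RCLike 𝕜]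

section Sqrt

variable [Fintype m] [DecidableEq m]

namespace PosSemidef

variable {A : Matrix m m 𝕜} (hA : A.PosSemidef)

lemma posSemidef_sqrt : hA.sqrt.PosSemidef := by
  simpa [sqrt, star_eq_conjTranspose] using
    (posSemidef_diagonal_iff.mpr fun i => RCLike.ofReal_nonneg.mpr (Real.sqrt_nonneg _)
      : (diagonal ((↑) ∘ (√·) ∘ hA.1.eigenvalues : m → 𝕜)).PosSemidef).mul_mul_conjTranspose_same
      hA.1.eigenvectorUnitary.1

lemma sqrt_mul_self : hA.sqrt * hA.sqrt = A := by
  set U : Matrix m m 𝕜 := hA.1.eigenvectorUnitary.1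
  set D : Matrix m m 𝕜 := diagonal ((↑) ∘ (√·) ∘ hA.1.eigenvalues)
  have hDD : D * D = diagonal (RCLike.ofReal ∘ hA.1.eigenvalues) := by
    rw [diagonal_mul_diagonal]
    congr 1
    funext i
    simp [← RCLike.ofReal_mul, Real.mul_self_sqrt (hA.eigenvalues_nonneg i)]
  conv_rhs => rw [hA.1.spectral_theorem, Unitary.conjStarAlgAut_apply]
  calc hA.sqrt * hA.sqrt = U * D * (star U * U) * D * star U := by
        simp only [sqrt, mul_assoc]; rfl
    _ = _ := by rw [Unitary.coe_star_mul_self, mul_one, mul_assoc U, hDD]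

end PosSemidef

lemma PosDef.isUnit_sqrt {A : Matrix m m 𝕜} (hA : A.PosDef) : IsUnit hA.posSemidef.sqrt :=
  isUnit_of_mul_isUnit_left (hA.posSemidef.sqrt_mul_self ▸ hA.isUnit)

end Sqrt

section Contraction

variable [Fintype m] [DecidableEq n]

/-- `‖K‖ ≤ 1` for the operator norm, stated without norms. -/
def IsContraction (K : Matrix m n 𝕜) : Prop := (1 - Kᴴ * K).PosSemidef

lemma IsContraction.neg {K : Matrix m n 𝕜} (hK : K.IsContraction) : (-K).IsContraction := by
  simpa [IsContraction] using hK

lemma isContraction_single [DecidableEq m] (k l : m) : (single k l (1 : 𝕜)).IsContraction := by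
  rw [IsContraction, conjTranspose_single, star_one, single_mul_single_same, one_mul,
    ← diagonal_single, ← diagonal_one, diagonal_sub, posSemidef_diagonal_iff]
  intro i
  by_cases hi : i = l <;> simp [hi]

end Contraction

theorem convex_setOf_fromBlocks_posSemidef (A : Matrix m m 𝕜) (B : Matrix n n 𝕜) :
    Convex ℝ {C : Matrix m n 𝕜 | (fromBlocks A C Cᴴ B).PosSemidef} := by
  intro C₁ h₁ C₂ h₂ a b ha hb hab
  have hcomb : fromBlocks A (a • C₁ + b • C₂) (a • C₁ + b • C₂)ᴴ B =
      a • fromBlocks A C₁ C₁ᴴ B + b • fromBlocks A C₂ C₂ᴴ B := by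
    rw [fromBlocks_smul, fromBlocks_smul, fromBlocks_add, Convex.combo_self hab A,
      Convex.combo_self hab B, conjTranspose_add, conjTranspose_smul, conjTranspose_smul,
      star_trivial, star_trivial]
  simpa only [Set.mem_ofPred_eq, hcomb] using (h₁.smul ha).add (h₂.smul hb)

section Blocks

variable [Fintype m] [Fintype n] [DecidableEq m] [DecidableEq n]

theorem fromBlocks_mul_self_posSemidef_iff {R : Matrix m m 𝕜} {Q : Matrix n n 𝕜}
    (hR : R.IsHermitian) (hQ : Q.IsHermitian) (hRu : IsUnit R) (hQu : IsUnit Q)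
    (K : Matrix m n 𝕜) :
    (fromBlocks (R * R) (R * K * Q) (R * K * Q)ᴴ (Q * Q)).PosSemidef ↔ K.IsContraction := by
  have hD : IsUnit (fromBlocks R 0 0 Q) := by
    rw [isUnit_iff_isUnit_det, det_fromBlocks_zero₂₁]
    exact (isUnit_iff_isUnit_det _ |>.mp hRu).mul (isUnit_iff_isUnit_det _ |>.mp hQu)
  have hconj : fromBlocks (R * R) (R * K * Q) (R * K * Q)ᴴ (Q * Q) =
      fromBlocks R 0 0 Q * fromBlocks 1 K Kᴴ 1 * star (fromBlocks R 0 0 Q) := by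
    simp [fromBlocks_multiply, star_eq_conjTranspose, fromBlocks_conjTranspose, hR.eq, hQ.eq,
      conjTranspose_mul, Matrix.mul_assoc]
  have : Invertible (1 : Matrix m m 𝕜) := invertibleOne
  rw [hconj, IsUnit.posSemidef_star_right_conjugate_iff hD,
    (PosDef.one : (1 : Matrix m m 𝕜).PosDef).fromBlocks₁₁ K 1, inv_one, Matrix.mul_one]
  rfl

theorem setOf_fromBlocks_posSemidef_eq_image {A R : Matrix m m 𝕜} {B Q : Matrix n n 𝕜}
    (hR : R.IsHermitian) (hQ : Q.IsHermitian) (hRu : IsUnit R) (hQu : IsUnit Q)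
    (hRA : R * R = A) (hQB : Q * Q = B) :
    {C : Matrix m n 𝕜 | (fromBlocks A C Cᴴ B).PosSemidef} =
      (fun K : Matrix m n 𝕜 => R * K * Q) '' {K | K.IsContraction} := by
  subst hRA hQB
  have hRd := (isUnit_iff_isUnit_det R).mp hRu
  have hQd := (isUnit_iff_isUnit_det Q).mp hQu
  have hfg (C : Matrix m n 𝕜) : R * (R⁻¹ * C * Q⁻¹) * Q = C := by
    simp only [Matrix.mul_assoc, nonsing_inv_mul _ hQd, Matrix.mul_one,
      mul_nonsing_inv_cancel_left _ _ hRd]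
  have hgf (K : Matrix m n 𝕜) : R⁻¹ * (R * K * Q) * Q⁻¹ = K := by
    simp only [Matrix.mul_assoc, mul_nonsing_inv _ hQd, Matrix.mul_one,
      nonsing_inv_mul_cancel_left _ _ hRd]
  rw [Set.image_eq_preimage_of_inverse (f := fun K => R * K * Q) (g := fun C => R⁻¹ * C * Q⁻¹)
    hgf hfg]
  ext C
  rw [Set.mem_preimage, Set.mem_ofPred_eq, Set.mem_ofPred_eq,
    ← fromBlocks_mul_self_posSemidef_iff hR hQ hRu hQu, hfg]

end Blocks

section ExtremePoints

variable [Fintype m] [DecidableEq m] {K : Matrix m m 𝕜}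

theorem mul_conjTranspose_mul_self_of_mem_extremePoints
    (hK : K ∈ Set.extremePoints ℝ {K : Matrix m m 𝕜 | K.IsContraction}) : K * Kᴴ * K = K := by
  set E := Kᴴ * K with hE
  have hEpsd : E.PosSemidef := posSemidef_conjTranspose_mul_self K
  have hNpsd : (1 - E).PosSemidef := hK.1
  have hdefect (c : ℝ) : 1 - (K + c • (K * (1 - E)))ᴴ * (K + c • (K * (1 - E))) =
      1 - (1 + c • (1 - E)) * E * (1 + c • (1 - E)) := by
    rw [conjTranspose_add, conjTranspose_smul, conjTranspose_mul, hNpsd.1.eq, star_trivial, hE]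
    noncomm_ring
  have hplus : (K + (2⁻¹ : ℝ) • (K * (1 - E))).IsContraction := by
    rw [IsContraction, hdefect,
      show 1 - (1 + (2⁻¹ : ℝ) • (1 - E)) * E * (1 + (2⁻¹ : ℝ) • (1 - E)) =
        (3 / 4 : ℝ) • (1 - E) ^ 2 + (4⁻¹ : ℝ) • (1 - E) ^ 3 by noncomm_ring; module]
    exact ((hNpsd.pow 2).smul (by norm_num)).add ((hNpsd.pow 3).smul (by norm_num))
  have hminus : (K - (2⁻¹ : ℝ) • (K * (1 - E))).IsContraction := by
    rw [sub_eq_add_neg, ← neg_smul, IsContraction, hdefect,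
      show 1 - (1 + (-2⁻¹ : ℝ) • (1 - E)) * E * (1 + (-2⁻¹ : ℝ) • (1 - E)) =
        (1 - E) + E * (1 - E) * E + (3 / 4 : ℝ) • ((1 - E) * E * (1 - E)) by
          noncomm_ring; module]
    refine (hNpsd.add ?_).add ((?_ : PosSemidef _).smul (by norm_num))
    · have := hNpsd.conjTranspose_mul_mul_same E
      rwa [hEpsd.1.eq] at this
    · have := hEpsd.conjTranspose_mul_mul_same (1 - E)
      rwa [hNpsd.1.eq] at this
  have hKN : K * (1 - E) = 0 := by
    simpa using eq_zero_of_mem_extremePoints_of_add_mem_of_sub_mem hK hplus hminus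
  rw [Matrix.mul_sub, Matrix.mul_one, sub_eq_zero] at hKN
  rw [Matrix.mul_assoc, ← hKN]

theorem isContraction_add_mul_mul (hKK : K * Kᴴ * K = K) {X : Matrix m m 𝕜}
    (hX : X.IsContraction) : (K + (1 - K * Kᴴ) * X * (1 - Kᴴ * K)).IsContraction := by
  set P := 1 - K * Kᴴ with hP
  set N := 1 - Kᴴ * K with hN
  have hKK' : Kᴴ * K * Kᴴ = Kᴴ := by
    simpa only [conjTranspose_mul, conjTranspose_conjTranspose, Matrix.mul_assoc]
      using congr_arg conjTranspose hKK
  have hPH : Pᴴ = P := by simp [hP]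
  have hNH : Nᴴ = N := by simp [hN]
  have hKP : Kᴴ * P = 0 := by
    rw [hP, Matrix.mul_sub, Matrix.mul_one, ← Matrix.mul_assoc, hKK', sub_self]
  have hPK : P * K = 0 := by rw [hP, Matrix.sub_mul, Matrix.one_mul, hKK, sub_self]
  have hKN : K * N = 0 := by
    rw [hN, Matrix.mul_sub, Matrix.mul_one, ← Matrix.mul_assoc, hKK, sub_self]
  have hPP : P * P = P := by
    rw [hP, Matrix.sub_mul, Matrix.one_mul, Matrix.mul_assoc, ← hP, hKP, Matrix.mul_zero,
      sub_zero]
  have hNN : N * N = N := by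
    rw [hN, Matrix.sub_mul, Matrix.one_mul, Matrix.mul_assoc, ← hN, hKN, Matrix.mul_zero,
      sub_zero]
  have hdefect : 1 - (K + P * X * N)ᴴ * (K + P * X * N) =
      Nᴴ * ((1 - Xᴴ * X) + (Kᴴ * X)ᴴ * (Kᴴ * X)) * N := by
    calc 1 - (K + P * X * N)ᴴ * (K + P * X * N)
        = N - Kᴴ * P * X * N - N * Xᴴ * (P * K) - N * Xᴴ * (P * P) * X * N := by
          rw [conjTranspose_add, conjTranspose_mul, conjTranspose_mul, hPH, hNH, hN]
          noncomm_ring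
      _ = N * N - N * Xᴴ * P * X * N := by rw [hKP, hPK, hPP, hNN]; noncomm_ring
      _ = _ := by rw [hNH, conjTranspose_mul, conjTranspose_conjTranspose, hP]; noncomm_ring
  rw [IsContraction, hdefect]
  exact (hX.add (posSemidef_conjTranspose_mul_self _)).conjTranspose_mul_mul_same N

theorem mem_unitaryGroup_of_mem_extremePoints
    (hK : K ∈ Set.extremePoints ℝ {K : Matrix m m 𝕜 | K.IsContraction}) :
    K ∈ unitaryGroup m 𝕜 := by
  have hKK := mul_conjTranspose_mul_self_of_mem_extremePoints hK
  have hPXN (X : Matrix m m 𝕜) (hX : X.IsContraction) :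
      (1 - K * Kᴴ) * X * (1 - Kᴴ * K) = 0 := by
    refine eq_zero_of_mem_extremePoints_of_add_mem_of_sub_mem hK
      (isContraction_add_mul_mul hKK hX) ?_
    simpa [sub_eq_add_neg] using isContraction_add_mul_mul hKK hX.neg
  rcases eq_zero_or_eq_zero_of_forall_mul_single_mul_eq_zero
      fun k k' => hPXN _ (isContraction_single k k') with hP | hN
  · exact mem_unitaryGroup_iff.mpr (sub_eq_zero.mp hP).symm
  · exact mem_unitaryGroup_iff'.mpr (sub_eq_zero.mp hN).symm

end ExtremePoints

end Matrix

/-- For positive definite `A`, `B`, the set of matrices `C` such that the block matrix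
`fromBlocks A C Cᴴ B` is positive semidefinite is convex (over `ℝ`), and its extreme
points are of the form `√A · U · √B` with `U` unitary. -/
theorem fromBlocks_posSemidef_convex_extremePoints {n : ℕ}
    (A B : Matrix (Fin n) (Fin n) ℂ) (hA : A.PosDef) (hB : B.PosDef) :
    Convex ℝ {C : Matrix (Fin n) (Fin n) ℂ | (Matrix.fromBlocks A C Cᴴ B).PosSemidef} ∧
      ∀ C ∈ Set.extremePoints ℝ
          {C : Matrix (Fin n) (Fin n) ℂ | (Matrix.fromBlocks A C Cᴴ B).PosSemidef},
        ∃ U ∈ Matrix.unitaryGroup (Fin n) ℂ,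
          C = hA.posSemidef.sqrt * U * hB.posSemidef.sqrt := by
  refine ⟨convex_setOf_fromBlocks_posSemidef A B, fun C hC => ?_⟩
  have hR := hA.isUnit_sqrt
  have hQ := hB.isUnit_sqrt
  rw [setOf_fromBlocks_posSemidef_eq_image hA.posSemidef.posSemidef_sqrt.1
    hB.posSemidef.posSemidef_sqrt.1 hR hQ hA.posSemidef.sqrt_mul_self
    hB.posSemidef.sqrt_mul_self] at hC
  obtain ⟨K, hK, rfl⟩ : C ∈ ((hR.unit.mulLeftLinearEquiv ℝ _).trans
      (hQ.unit.mulRightLinearEquiv ℝ)) '' Set.extremePoints ℝ {K | K.IsContraction} := by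
    rwa [image_extremePoints]
  exact ⟨K, mem_unitaryGroup_of_mem_extremePoints hK, rfl⟩
end

section
/- Every 2×2 complex matrix R that is a contraction (i.e. 1 − RᴴR is positive semidefinite) can be written as a convex combination of two unitary matrices: there exist p ∈ [0,1] and unitary 2×2 matrices U and V such that R = p·U + (1−p)·V. -/
/-!
Take a singular value decomposition `R = W Σ Bᴴ` with `W`, `B` unitary and `Σ` real diagonal.
Since `Bᴴ (1 - RᴴR) B = 1 - Σ²` is positive semidefinite, every singular value satisfies
`|σᵢ| ≤ 1`, so `σᵢ = Re zᵢ` for some unimodular `zᵢ`. With `Z = diag zᵢ` this gives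
`Σ = (Z + Z̄) / 2`, hence `R = ½ (W Z Bᴴ) + ½ (W Z̄ Bᴴ)`.
-/

open Matrix
open scoped ComplexOrder

lemma Complex.exists_star_mul_self_eq_one_re_eq {x : ℝ} (hx : |x| ≤ 1) :
    ∃ z : ℂ, star z * z = 1 ∧ z.re = x := by
  refine ⟨⟨x, √(1 - x ^ 2)⟩, ?_, rfl⟩
  have h : √(1 - x ^ 2) ^ 2 = 1 - x ^ 2 :=
    Real.sq_sqrt (sub_nonneg.2 ((sq_le_one_iff_abs_le_one x).2 hx))
  rw [RCLike.star_def, ← Complex.normSq_eq_conj_mul_self, Complex.normSq_mk]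
  norm_cast
  linear_combination h

namespace Matrix
variable {n : Type*} [Fintype n] [DecidableEq n]

lemma diagonal_mem_unitaryGroup {α : Type*} [CommRing α] [StarRing α] {z : n → α}
    (hz : ∀ i, star (z i) * z i = 1) : diagonal z ∈ unitaryGroup n α := by
  rw [mem_unitaryGroup_iff', star_eq_conjTranspose, diagonal_conjTranspose,
    diagonal_mul_diagonal, ← diagonal_one]
  exact congrArg diagonal (funext hz)

section RCLike
variable {𝕜 : Type*} [RCLike 𝕜]

lemma exists_unitary_eq_mul_diagonal_sqrt {M : Matrix n n 𝕜} {d : n → ℝ} (hd : ∀ i, 0 ≤ d i)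
    (hM : Mᴴ * M = diagonal fun i => (d i : 𝕜)) :
    ∃ W ∈ unitaryGroup n 𝕜, M = W * diagonal fun i => ((√(d i) : ℝ) : 𝕜) := by
  -- The normalized nonzero columns of `M` are orthonormal; `W` is any orthonormal basis
  -- extending them.
  set col : n → EuclideanSpace 𝕜 n := fun j => WithLp.toLp 2 fun i => M i j
  have inner_col (i j : n) : inner 𝕜 (col i) (col j) = if i = j then (d i : 𝕜) else 0 := by
    have := congrFun (congrFun hM i) j
    simp only [mul_apply, conjTranspose_apply, diagonal_apply] at this
    rw [← this, EuclideanSpace.inner_eq_star_dotProduct, dotProduct]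
    simp [col, mul_comm]
  set v : n → EuclideanSpace 𝕜 n := fun j => ((√(d j) : ℝ) : 𝕜)⁻¹ • col j
  have hv : Orthonormal 𝕜 (Set.domRestrict {j | d j ≠ 0} v) := by
    rw [orthonormal_iff_ite]
    rintro ⟨i, hi⟩ ⟨j, hj⟩
    simp only [Set.domRestrict_apply, v, inner_smul_left, inner_smul_right, inner_col,
      Subtype.mk.injEq]
    split_ifs with hij
    · subst hij
      have hs : √(d i) ≠ 0 := (Real.sqrt_pos.2 ((hd i).lt_of_ne' hi)).ne'
      rw [map_inv₀, RCLike.conj_ofReal]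
      norm_cast
      field_simp
      exact (Real.sq_sqrt (hd i)).symm
    · simp
  obtain ⟨b, hb⟩ := hv.exists_orthonormalBasis_extension_of_card_eq (by simp)
  refine ⟨(EuclideanSpace.basisFun n 𝕜).toBasis.toMatrix b.toBasis,
    (EuclideanSpace.basisFun n 𝕜).toMatrix_orthonormalBasis_mem_unitary b, ?_⟩
  ext i j
  rw [mul_diagonal]
  by_cases hj : d j = 0
  · have hcol : col j = 0 := by
      rw [← inner_self_eq_zero (𝕜 := 𝕜), inner_col, if_pos rfl, hj, RCLike.ofReal_zero]
    have : M i j = 0 := congrArg (fun x : EuclideanSpace 𝕜 n => x i) hcol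
    simp [this, hj]
  · have hs : √(d j) ≠ 0 := (Real.sqrt_pos.2 ((hd j).lt_of_ne' hj)).ne'
    have hbj := congrArg (fun x : EuclideanSpace 𝕜 n => x i) (hb j hj)
    simp only [v, col] at hbj
    rw [Module.Basis.toMatrix_apply]
    simp only [OrthonormalBasis.coe_toBasis, OrthonormalBasis.coe_toBasis_repr_apply,
      EuclideanSpace.basisFun_repr, hbj, PiLp.smul_apply, smul_eq_mul]
    field_simp

theorem exists_eq_unitary_mul_diagonal_mul_star (M : Matrix n n 𝕜) :
    ∃ W ∈ unitaryGroup n 𝕜, ∃ B ∈ unitaryGroup n 𝕜, ∃ σ : n → ℝ,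
      M = W * diagonal (fun i => (σ i : 𝕜)) * star B := by
  have hH : (Mᴴ * M).PosSemidef := posSemidef_conjTranspose_mul_self M
  obtain ⟨B, hB, hdiag⟩ : ∃ B ∈ unitaryGroup n 𝕜,
      star B * (Mᴴ * M) * B = diagonal fun i => (hH.isHermitian.eigenvalues i : 𝕜) :=
    ⟨_, hH.isHermitian.eigenvectorUnitary.2, (Unitary.conjStarAlgAut_star_apply _ _).symm.trans
      hH.isHermitian.conjStarAlgAut_star_eigenvectorUnitary⟩
  obtain ⟨W, hW, hMB⟩ := exists_unitary_eq_mul_diagonal_sqrt (M := M * B) hH.eigenvalues_nonneg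
    (by simpa [conjTranspose_mul, star_eq_conjTranspose, mul_assoc] using hdiag)
  refine ⟨W, hW, B, hB, fun i => √(hH.isHermitian.eigenvalues i), ?_⟩
  rw [← hMB, mul_assoc, mem_unitaryGroup_iff.1 hB, mul_one]

lemma abs_le_one_of_posSemidef_one_sub_conjTranspose_mul_self {M W B : Matrix n n 𝕜} {σ : n → ℝ}
    (hW : W ∈ unitaryGroup n 𝕜) (hB : B ∈ unitaryGroup n 𝕜)
    (hM : M = W * diagonal (fun i => (σ i : 𝕜)) * star B) (h : (1 - Mᴴ * M).PosSemidef)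
    (i : n) : |σ i| ≤ 1 := by
  have hWW : star W * W = 1 := mem_unitaryGroup_iff'.1 hW
  have hBB : star B * B = 1 := mem_unitaryGroup_iff'.1 hB
  have hMM : Mᴴ * M = B * diagonal (fun i => (σ i : 𝕜) ^ 2) * star B := by
    calc Mᴴ * M = B * ((diagonal fun i => (σ i : 𝕜))ᴴ * (star W * W) *
          diagonal fun i => (σ i : 𝕜)) * star B := by
          simp only [hM, ← star_eq_conjTranspose, star_mul, star_star, mul_assoc]
      _ = B * diagonal (fun i => (σ i : 𝕜) ^ 2) * star B := by
          rw [hWW, mul_one, diagonal_conjTranspose, diagonal_mul_diagonal]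
          simp [sq]
  have hdiag : star B * (1 - Mᴴ * M) * B = diagonal fun i => 1 - (σ i : 𝕜) ^ 2 := by
    calc star B * (1 - Mᴴ * M) * B
        = star B * B - (star B * B) * diagonal (fun i => (σ i : 𝕜) ^ 2) * (star B * B) := by
          simp only [hMM, mul_sub, sub_mul, mul_one, mul_assoc]
      _ = diagonal fun i => 1 - (σ i : 𝕜) ^ 2 := by
          rw [hBB, one_mul, mul_one, ← diagonal_one, diagonal_sub]
  have hconj := h.conjTranspose_mul_mul_same B
  rw [← star_eq_conjTranspose, hdiag, posSemidef_diagonal_iff] at hconj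
  have hσ : (0 : 𝕜) ≤ ((1 - σ i ^ 2 : ℝ) : 𝕜) := by exact_mod_cast hconj i
  rw [RCLike.ofReal_nonneg, sub_nonneg] at hσ
  exact (sq_le_one_iff_abs_le_one _).1 hσ

end RCLike

lemma exists_mem_unitaryGroup_half_smul_add_eq_diagonal {σ : n → ℝ} (hσ : ∀ i, |σ i| ≤ 1) :
    ∃ U ∈ unitaryGroup n ℂ, ∃ V ∈ unitaryGroup n ℂ,
      diagonal (fun i => (σ i : ℂ)) = (1 / 2 : ℝ) • (U + V) := by
  choose z hz hre using fun i => Complex.exists_star_mul_self_eq_one_re_eq (hσ i)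
  refine ⟨diagonal z, diagonal_mem_unitaryGroup hz, diagonal (star z),
    diagonal_mem_unitaryGroup fun i => by simpa [mul_comm] using hz i, ?_⟩
  rw [diagonal_add, ← diagonal_smul]
  congr 1
  ext i
  simp only [Pi.smul_apply, Pi.star_apply, RCLike.star_def, Complex.add_conj,
    Complex.real_smul, hre]
  push_cast
  ring

end Matrix

/-- Every 2×2 complex contraction (`1 − RᴴR` positive semidefinite) is a convex
combination of two unitary matrices. -/
theorem contraction_convex_combination_of_unitaries
    (R : Matrix (Fin 2) (Fin 2) ℂ) (hR : (1 - Rᴴ * R).PosSemidef) :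
    ∃ p : ℝ, p ∈ Set.Icc (0 : ℝ) 1 ∧
      ∃ U ∈ Matrix.unitaryGroup (Fin 2) ℂ, ∃ V ∈ Matrix.unitaryGroup (Fin 2) ℂ,
        R = p • U + (1 - p) • V := by
  obtain ⟨W, hW, B, hB, σ, hRσ⟩ := exists_eq_unitary_mul_diagonal_mul_star R
  rw [RCLike.ofReal_eq_complex_ofReal] at hRσ
  obtain ⟨U, hU, V, hV, hUV⟩ := exists_mem_unitaryGroup_half_smul_add_eq_diagonal
    (abs_le_one_of_posSemidef_one_sub_conjTranspose_mul_self hW hB hRσ hR)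
  have hB' : star B ∈ unitaryGroup (Fin 2) ℂ := Unitary.star_mem hB
  refine ⟨1 / 2, by norm_num, W * U * star B, mul_mem (mul_mem hW hU) hB',
    W * V * star B, mul_mem (mul_mem hW hV) hB', ?_⟩
  rw [hRσ, hUV, show (1 - 1 / 2 : ℝ) = 1 / 2 by norm_num, ← smul_add, Matrix.mul_smul,
    Matrix.smul_mul, mul_add, add_mul]
end

section
/- Let σ₁ = !![0,1;1,0], σ₂ = !![0,−i;i,0], σ₃ = !![1,0;0,−1] be the Pauli matrices in Matrix (Fin 2) (Fin 2) ℂ and F_k = σ_k/√2. For a 3×3 complex matrix A define the linear map L_A on Matrix (Fin 2) (Fin 2) ℂ by L_A(ρ) = Σ_{i,j=1}^{3} A_{ij}·((F_j ρ F_iᴴ − ρ F_iᴴ F_j) + (F_j ρ F_iᴴ − F_iᴴ F_j ρ)). Then for every U ∈ SU(2) (a 2×2 unitary complex matrix with determinant 1) there exists a real 3×3 matrix O with O·Oᵀ = 1 and det O = 1 such that for all ρ ∈ Matrix (Fin 2) (Fin 2) ℂ, Uᴴ · L_A(U ρ Uᴴ) · U = L_{O A Oᵀ}(ρ), where O is regarded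 as a complex matrix via the real entries. -/
open Matrix

/-- The Pauli matrices `σ₁, σ₂, σ₃` as 2×2 complex matrices, indexed by `Fin 3`. -/
noncomputable def pauli : Fin 3 → Matrix (Fin 2) (Fin 2) ℂ
  | 0 => !![0, 1; 1, 0]
  | 1 => !![0, -Complex.I; Complex.I, 0]
  | 2 => !![1, 0; 0, -1]

/-- The normalized Pauli basis `F_k = σ_k/√2`. -/
noncomputable def Fop (k : Fin 3) : Matrix (Fin 2) (Fin 2) ℂ :=
  ((Real.sqrt 2 : ℂ))⁻¹ • pauli k

/-- The GKS (Lindblad) dissipative generator associated to a 3×3 GKS matrix `A` in the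
normalized Pauli basis:
`L_A(ρ) = Σ_{i,j} A_{ij}·((F_j ρ F_iᴴ − ρ F_iᴴ F_j) + (F_j ρ F_iᴴ − F_iᴴ F_j ρ))`. -/
noncomputable def gksGen (A : Matrix (Fin 3) (Fin 3) ℂ) (ρ : Matrix (Fin 2) (Fin 2) ℂ) :
    Matrix (Fin 2) (Fin 2) ℂ :=
  ∑ i : Fin 3, ∑ j : Fin 3, A i j •
    ((Fop j * ρ * (Fop i)ᴴ - ρ * ((Fop i)ᴴ * Fop j)) +
      (Fop j * ρ * (Fop i)ᴴ - ((Fop i)ᴴ * Fop j) * ρ))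

/-- Abstract conjugation lemma: if conjugation by `U` permutes the normalized Pauli basis
according to a complex matrix `Oc`, then conjugating the GKS generator by `U` conjugates the
GKS matrix by `Oc`. -/
lemma gksGen_conj_aux (A : Matrix (Fin 3) (Fin 3) ℂ) (U : Matrix (Fin 2) (Fin 2) ℂ)
    (h1 : Uᴴ * U = 1) (h2 : U * Uᴴ = 1) (Oc : Matrix (Fin 3) (Fin 3) ℂ)
    (hVF : ∀ j, Uᴴ * Fop j * U = ∑ k, Oc k j • Fop k)
    (hWF : ∀ i, Uᴴ * (Fop i)ᴴ * U = ∑ l, Oc l i • (Fop l)ᴴ)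
    (ρ : Matrix (Fin 2) (Fin 2) ℂ) :
    Uᴴ * gksGen A (U * ρ * Uᴴ) * U = gksGen (Oc * A * Ocᵀ) ρ := by
  have hconj : ∀ X : Matrix (Fin 2) (Fin 2) ℂ,
      Uᴴ * ((U * ρ * Uᴴ) * X) * U = ρ * (Uᴴ * X * U) := by
    intro X
    calc Uᴴ * ((U * ρ * Uᴴ) * X) * U = (Uᴴ * U) * (ρ * (Uᴴ * X * U)) := by noncomm_ring
      _ = ρ * (Uᴴ * X * U) := by rw [h1, one_mul]
  have hconj' : ∀ X : Matrix (Fin 2) (Fin 2) ℂ,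
      Uᴴ * (X * (U * ρ * Uᴴ)) * U = (Uᴴ * X * U) * ρ := by
    intro X
    calc Uᴴ * (X * (U * ρ * Uᴴ)) * U = ((Uᴴ * X * U) * ρ) * (Uᴴ * U) := by noncomm_ring
      _ = (Uᴴ * X * U) * ρ := by rw [h1, mul_one]
  have hsplit : ∀ X Y : Matrix (Fin 2) (Fin 2) ℂ,
      Uᴴ * (X * Y) * U = (Uᴴ * X * U) * (Uᴴ * Y * U) := by
    intro X Y
    calc Uᴴ * (X * Y) * U = Uᴴ * (X * ((U * Uᴴ) * Y)) * U := by rw [h2, one_mul]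
      _ = (Uᴴ * X * U) * (Uᴴ * Y * U) := by noncomm_ring
  have key : ∀ i j : Fin 3,
      Uᴴ * ((Fop j * (U * ρ * Uᴴ) * (Fop i)ᴴ - (U * ρ * Uᴴ) * ((Fop i)ᴴ * Fop j)) +
        (Fop j * (U * ρ * Uᴴ) * (Fop i)ᴴ - ((Fop i)ᴴ * Fop j) * (U * ρ * Uᴴ))) * U
      = ∑ l : Fin 3, ∑ k : Fin 3, (Oc l i * Oc k j) •
          ((Fop k * ρ * (Fop l)ᴴ - ρ * ((Fop l)ᴴ * Fop k)) +
            (Fop k * ρ * (Fop l)ᴴ - ((Fop l)ᴴ * Fop k) * ρ)) := by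
    intro i j
    have t1 : Uᴴ * (Fop j * (U * ρ * Uᴴ) * (Fop i)ᴴ) * U
        = (Uᴴ * Fop j * U) * ρ * (Uᴴ * (Fop i)ᴴ * U) := by noncomm_ring
    have expand : Uᴴ * ((Fop j * (U * ρ * Uᴴ) * (Fop i)ᴴ - (U * ρ * Uᴴ) * ((Fop i)ᴴ * Fop j)) +
        (Fop j * (U * ρ * Uᴴ) * (Fop i)ᴴ - ((Fop i)ᴴ * Fop j) * (U * ρ * Uᴴ))) * U
        = (Uᴴ * (Fop j * (U * ρ * Uᴴ) * (Fop i)ᴴ) * U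
            - Uᴴ * ((U * ρ * Uᴴ) * ((Fop i)ᴴ * Fop j)) * U)
          + (Uᴴ * (Fop j * (U * ρ * Uᴴ) * (Fop i)ᴴ) * U
            - Uᴴ * (((Fop i)ᴴ * Fop j) * (U * ρ * Uᴴ)) * U) := by noncomm_ring
    rw [expand, t1, hconj _, hconj' _, hsplit, hVF j, hWF i]
    simp only [Fin.sum_univ_three, add_mul, mul_add, sub_mul, mul_sub, smul_mul_assoc,
      mul_smul_comm, smul_smul, smul_add, smul_sub]
    module
  calc Uᴴ * gksGen A (U * ρ * Uᴴ) * U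
      = ∑ i : Fin 3, ∑ j : Fin 3, A i j •
          (Uᴴ * ((Fop j * (U * ρ * Uᴴ) * (Fop i)ᴴ - (U * ρ * Uᴴ) * ((Fop i)ᴴ * Fop j)) +
            (Fop j * (U * ρ * Uᴴ) * (Fop i)ᴴ - ((Fop i)ᴴ * Fop j) * (U * ρ * Uᴴ))) * U) := by
        rw [gksGen]
        simp only [Finset.sum_mul, Finset.mul_sum, smul_mul_assoc, mul_smul_comm]
    _ = gksGen (Oc * A * Ocᵀ) ρ := by
        simp only [key, gksGen, Matrix.mul_apply, Matrix.transpose_apply, Fin.sum_univ_three,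
          Finset.smul_sum, smul_smul, add_smul, smul_add, smul_sub]
        module

set_option maxHeartbeats 1600000 in
/-- Unitary conjugation of the GKS generator by `U ∈ SU(2)` conjugates the GKS matrix by a
corresponding rotation `O ∈ SO(3)` (the adjoint representation of `SU(2)`). -/
theorem gksGen_unitary_conjugation (A : Matrix (Fin 3) (Fin 3) ℂ)
    (U : Matrix (Fin 2) (Fin 2) ℂ)
    (hU : U ∈ Matrix.unitaryGroup (Fin 2) ℂ) (hdet : U.det = 1) :
    ∃ O : Matrix (Fin 3) (Fin 3) ℝ, O * Oᵀ = 1 ∧ O.det = 1 ∧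
      ∀ ρ : Matrix (Fin 2) (Fin 2) ℂ,
        Uᴴ * gksGen A (U * ρ * Uᴴ) * U =
          gksGen ((O.map Complex.ofReal) * A * (O.map Complex.ofReal)ᵀ) ρ := by
  have h1 : Uᴴ * U = 1 := by
    have := Matrix.mem_unitaryGroup_iff'.mp hU
    simpa [Matrix.star_eq_conjTranspose] using this
  have h2 : U * Uᴴ = 1 := by
    have := Matrix.mem_unitaryGroup_iff.mp hU
    simpa [Matrix.star_eq_conjTranspose] using this
  have hadj : Uᴴ = !![U 1 1, -U 0 1; -U 1 0, U 0 0] := by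
    have hinv : U⁻¹ = Uᴴ := Matrix.inv_eq_right_inv h2
    rw [← hinv, Matrix.inv_def, hdet, Matrix.adjugate_fin_two, Ring.inverse_one, one_smul]
  have hd : U 1 1 = star (U 0 0) := by
    have := congrFun (congrFun hadj 0) 0
    simp [Matrix.conjTranspose_apply] at this
    exact this.symm
  have hc : U 1 0 = -star (U 0 1) := by
    have := congrFun (congrFun hadj 0) 1
    simp [Matrix.conjTranspose_apply] at this
    have h := congrArg star this
    simpa using h
  set p := (U 0 0).re with hp
  set q := (U 0 0).im with hq
  set r := (U 0 1).re with hr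
  set s := (U 0 1).im with hs
  have hnorm : p^2 + q^2 + r^2 + s^2 = 1 := by
    have := congrFun (congrFun h2 0) 0
    simp [Matrix.mul_apply, Fin.sum_univ_two, Matrix.conjTranspose_apply, Matrix.one_apply] at this
    have := congrArg Complex.re this
    simp [Complex.mul_re, Complex.add_re, ← hp, ← hq, ← hr, ← hs] at this
    nlinarith [this]
  set O : Matrix (Fin 3) (Fin 3) ℝ :=
    !![p^2-q^2-r^2+s^2, 2*(r*s-p*q), 2*(p*r+q*s);
       2*(p*q+r*s), p^2-q^2+r^2-s^2, 2*(q*r-p*s);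
       -2*(p*r-q*s), 2*(p*s+q*r), p^2+q^2-r^2-s^2] with hO
  have hOT : Oᵀ = !![p^2-q^2-r^2+s^2, 2*(p*q+r*s), -2*(p*r-q*s);
       2*(r*s-p*q), p^2-q^2+r^2-s^2, 2*(p*s+q*r);
       2*(p*r+q*s), 2*(q*r-p*s), p^2+q^2-r^2-s^2] := by
    rw [hO]
    ext i j
    fin_cases i <;> fin_cases j <;> rfl
  have horth : O * Oᵀ = 1 := by
    rw [hOT]
    ext i j
    fin_cases i <;> fin_cases j <;>
    · simp [hO, Matrix.mul_apply, Fin.sum_univ_three, Matrix.one_apply]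
      first
      | (linear_combination (p^2+q^2+r^2+s^2+1) * hnorm)
      | ring
  have hdetO : O.det = 1 := by
    simp [hO, Matrix.det_fin_three]
    linear_combination ((p^2+q^2+r^2+s^2)^2 + (p^2+q^2+r^2+s^2) + 1) * hnorm
  have hV : ∀ j : Fin 3, Uᴴ * pauli j * U = ∑ k : Fin 3, ((O k j : ℝ) : ℂ) • pauli k := by
    intro j
    fin_cases j <;>
    · ext i' j'
      fin_cases i' <;> fin_cases j' <;>
      · simp [pauli, Matrix.mul_apply, Fin.sum_univ_two, Fin.sum_univ_three,
          Matrix.conjTranspose_apply, hO, hc, hd]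
        simp [Complex.ext_iff, Complex.mul_re, Complex.mul_im, ← Complex.ofReal_pow,
          Complex.ofReal_re, Complex.ofReal_im, ← hp, ← hq, ← hr, ← hs]
        first
        | rfl
        | (constructor <;> ring)
  have hVF : ∀ j : Fin 3, Uᴴ * Fop j * U = ∑ k : Fin 3, (O.map Complex.ofReal) k j • Fop k := by
    intro j
    simp only [Fop, mul_smul_comm, smul_mul_assoc, hV j, Finset.smul_sum, smul_smul,
      Matrix.map_apply]
    refine Finset.sum_congr rfl fun k _ => ?_
    rw [mul_comm]
  have hWF : ∀ i : Fin 3, Uᴴ * (Fop i)ᴴ * U = ∑ l : Fin 3, (O.map Complex.ofReal) l i • (Fop l)ᴴ := by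
    intro i
    have h := congrArg conjTranspose (hVF i)
    simp only [Matrix.conjTranspose_mul, Matrix.conjTranspose_conjTranspose,
      Matrix.conjTranspose_sum, Matrix.conjTranspose_smul, Matrix.map_apply,
      Complex.star_def, Complex.conj_ofReal] at h
    calc Uᴴ * (Fop i)ᴴ * U = Uᴴ * ((Fop i)ᴴ * U) := by rw [mul_assoc]
      _ = ∑ l : Fin 3, (O.map Complex.ofReal) l i • (Fop l)ᴴ := by
          simp only [Matrix.map_apply]
          exact h
  exact ⟨O, horth, hdetO, fun ρ => gksGen_conj_aux A U h1 h2 (O.map Complex.ofReal) hVF hWF ρ⟩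
end

section
/- For θ ∈ ℝ let A_θ be the 3×3 complex matrix with entries (A_θ)₁₁ = cos²θ, (A_θ)₁₂ = −i·cosθ·sinθ, (A_θ)₂₁ = i·cosθ·sinθ, (A_θ)₂₂ = sin²θ, and all other entries 0. Then for every vector v ∈ ℂ³ with Σ_i |v_i|² = 1 there exist a real 3×3 matrix G with G·Gᵀ = 1 and det G = 1, and an angle θ ∈ [0, π/4], such that the rank-one matrix v v† (with entries v_i · conj(v_j)) equals G · A_θ · Gᵀ, where G is regarded as a complex matrix via its real entries. -/
/-!
Multiplying `v` by a unit phase `z` does not change `v v†`, and `z` can be chosen so that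
`∑ (z vᵢ)²` is real and nonnegative. Then `x = Re (z v)` and `y = Im (z v)` are orthogonal with
`|y| ≤ |x|` and `|x|² + |y|² = 1`, so `z v = cos θ a + i sin θ b` for an orthonormal pair `a, b`
and some `θ ∈ [0, π/4]`. The rotation `G` with columns `a, b, a × b` maps
`w = (cos θ, i sin θ, 0)` to `z v`, hence `v v† = G (w w†) Gᵀ = G A_θ Gᵀ`.
-/

open Matrix

/-- The normal-form GKS matrix `A_θ`. -/
noncomputable def Atheta (θ : ℝ) : Matrix (Fin 3) (Fin 3) ℂ :=
  !![((Real.cos θ : ℂ)) ^ 2, -Complex.I * Real.cos θ * Real.sin θ, 0;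
     Complex.I * Real.cos θ * Real.sin θ, ((Real.sin θ : ℂ)) ^ 2, 0;
     0, 0, 0]

theorem vecMulVec_mulVec_star {m n α : Type*} [Fintype n] [NonUnitalSemiring α] [StarRing α]
    (M : Matrix m n α) (w : n → α) :
    vecMulVec (M *ᵥ w) (star (M *ᵥ w)) = M * vecMulVec w (star w) * Mᴴ := by
  rw [star_mulVec, mul_vecMulVec, vecMulVec_mul]

theorem vecMulVec_smul_star_smul {n α : Type*} [CommRing α] [StarRing α] {z : α}
    (hz : z * star z = 1) (v : n → α) :
    vecMulVec (z • v) (star (z • v)) = vecMulVec v (star v) := by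
  ext i j
  simp only [vecMulVec_apply, Pi.star_apply, Pi.smul_apply, smul_eq_mul, star_mul']
  linear_combination (v i * star (v j)) * hz

theorem Complex.exists_norm_eq_one_sq_mul_eq_norm (S : ℂ) :
    ∃ z : ℂ, ‖z‖ = 1 ∧ z ^ 2 * S = ‖S‖ := by
  set z := Complex.exp (↑(-(S.arg / 2)) * Complex.I)
  have hz : z ^ 2 * Complex.exp (S.arg * Complex.I) = 1 := by
    rw [← Complex.exp_nat_mul, ← Complex.exp_add, ← Complex.exp_zero]
    push_cast
    ring_nf
  refine ⟨z, Complex.norm_exp_ofReal_mul_I _, ?_⟩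
  calc z ^ 2 * S = ‖S‖ * (z ^ 2 * Complex.exp (S.arg * Complex.I)) := by
        nth_rw 1 [← Complex.norm_mul_exp_arg_mul_I S]; ring
    _ = (‖S‖ : ℂ) := by rw [hz, mul_one]

section ReIm

variable {ι : Type*} [Fintype ι] (u : ι → ℂ)

theorem Complex.sum_norm_sq_eq_dotProduct :
    ∑ i, ‖u i‖ ^ 2 =
      (Complex.re ∘ u) ⬝ᵥ (Complex.re ∘ u) + (Complex.im ∘ u) ⬝ᵥ (Complex.im ∘ u) := by
  simp only [dotProduct, Function.comp_apply, ← Finset.sum_add_distrib, Complex.sq_norm,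
    Complex.normSq_apply]

theorem Complex.re_sum_sq_eq_dotProduct :
    (∑ i, u i ^ 2).re =
      (Complex.re ∘ u) ⬝ᵥ (Complex.re ∘ u) - (Complex.im ∘ u) ⬝ᵥ (Complex.im ∘ u) := by
  simp only [Complex.re_sum, dotProduct, Function.comp_apply, ← Finset.sum_sub_distrib, sq,
    Complex.mul_re]

theorem Complex.im_sum_sq_eq_dotProduct :
    (∑ i, u i ^ 2).im = 2 * (Complex.re ∘ u) ⬝ᵥ (Complex.im ∘ u) := by
  simp only [Complex.im_sum, dotProduct, Function.comp_apply, Finset.mul_sum, sq, Complex.mul_im]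
  exact Finset.sum_congr rfl fun i _ => by ring

end ReIm

theorem Real.exists_mem_Icc_cos_eq_sin_eq {c s : ℝ} (hs : 0 ≤ s) (hsc : s ≤ c)
    (h : c ^ 2 + s ^ 2 = 1) :
    ∃ θ ∈ Set.Icc 0 (Real.pi / 4), Real.cos θ = c ∧ Real.sin θ = s := by
  have hs1 : s ≤ 1 := by nlinarith
  have hc : c = √(1 - s ^ 2) := by
    rw [← h, add_sub_cancel_right, Real.sqrt_sq (hs.trans hsc)]
  refine ⟨Real.arcsin s, ⟨Real.arcsin_nonneg.mpr hs, ?_⟩, ?_, Real.sin_arcsin (by linarith) hs1⟩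
  · rw [Real.arcsin_le_iff_le_sin ⟨by linarith, hs1⟩
      ⟨by linarith [Real.pi_pos], by linarith [Real.pi_pos]⟩, Real.sin_pi_div_four]
    nlinarith [Real.sq_sqrt (show (0 : ℝ) ≤ 2 by norm_num), Real.sqrt_nonneg 2]
  · rw [Real.cos_arcsin, hc]

section DotProduct

variable {ι : Type*} [Fintype ι]

theorem dotProduct_eq_zero_of_eq_smul {R : Type*} [CommRing R] [NoZeroDivisors R]
    {x a z : ι → R} {c : R} (hx : x ≠ 0) (hxa : x = c • a) (hzx : z ⬝ᵥ x = 0) :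
    z ⬝ᵥ a = 0 := by
  rw [hxa, dotProduct_smul, smul_eq_mul, mul_eq_zero] at hzx
  exact hzx.resolve_left fun hc => hx (by rw [hxa, hc, zero_smul])

theorem exists_dotProduct_self_eq_one_smul_eq {x : ι → ℝ} (hx : x ≠ 0) :
    ∃ a : ι → ℝ, a ⬝ᵥ a = 1 ∧ x = √(x ⬝ᵥ x) • a := by
  have hpos : 0 < x ⬝ᵥ x :=
    lt_of_le_of_ne (Finset.sum_nonneg fun i _ => mul_self_nonneg (x i))
      (Ne.symm (dotProduct_self_eq_zero.not.mpr hx))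
  have hc : √(x ⬝ᵥ x) ≠ 0 := (Real.sqrt_pos.mpr hpos).ne'
  refine ⟨(√(x ⬝ᵥ x))⁻¹ • x, ?_, by rw [smul_smul, mul_inv_cancel₀ hc, one_smul]⟩
  rw [smul_dotProduct, dotProduct_smul, smul_eq_mul, smul_eq_mul, ← mul_assoc, ← sq, inv_pow,
    Real.sq_sqrt hpos.le, inv_mul_cancel₀ hpos.ne']

theorem exists_dotProduct_self_eq_one_orthogonal_smul_eq [Nontrivial ι] {a y : ι → ℝ}
    (hay : a ⬝ᵥ y = 0) :
    ∃ b : ι → ℝ, b ⬝ᵥ b = 1 ∧ a ⬝ᵥ b = 0 ∧ y = √(y ⬝ᵥ y) • b := by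
  have normalize (w : ι → ℝ) (hw : w ≠ 0) (haw : a ⬝ᵥ w = 0) :
      ∃ b, b ⬝ᵥ b = 1 ∧ a ⬝ᵥ b = 0 ∧ w = √(w ⬝ᵥ w) • b :=
    let ⟨b, hb, hwb⟩ := exists_dotProduct_self_eq_one_smul_eq hw
    ⟨b, hb, dotProduct_eq_zero_of_eq_smul hw hwb haw, hwb⟩
  rcases eq_or_ne y 0 with rfl | hy
  · obtain ⟨w, hw, hwa⟩ := exists_ne_zero_dotProduct_eq_zero a
    obtain ⟨b, hb, hab, -⟩ := normalize w hw (by rwa [dotProduct_comm])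
    exact ⟨b, hb, hab, by simp⟩
  · exact normalize y hy hay

theorem exists_cos_sin_orthonormal [Nontrivial ι] {x y : ι → ℝ}
    (hsum : x ⬝ᵥ x + y ⬝ᵥ y = 1) (hle : y ⬝ᵥ y ≤ x ⬝ᵥ x) (hxy : x ⬝ᵥ y = 0) :
    ∃ θ ∈ Set.Icc 0 (Real.pi / 4), ∃ a b : ι → ℝ, a ⬝ᵥ a = 1 ∧ b ⬝ᵥ b = 1 ∧ a ⬝ᵥ b = 0 ∧
      x = Real.cos θ • a ∧ y = Real.sin θ • b := by
  have hy0 : 0 ≤ y ⬝ᵥ y := Finset.sum_nonneg fun i _ => mul_self_nonneg (y i)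
  have hx : x ≠ 0 := by
    rintro rfl
    simp only [dotProduct_zero] at hsum hle
    linarith
  obtain ⟨a, ha, hxa⟩ := exists_dotProduct_self_eq_one_smul_eq hx
  have hay : a ⬝ᵥ y = 0 := by
    rw [dotProduct_comm] at hxy ⊢
    exact dotProduct_eq_zero_of_eq_smul hx hxa hxy
  obtain ⟨b, hb, hab, hyb⟩ := exists_dotProduct_self_eq_one_orthogonal_smul_eq hay
  obtain ⟨θ, hθ, hcos, hsin⟩ := Real.exists_mem_Icc_cos_eq_sin_eq (Real.sqrt_nonneg _)
    (Real.sqrt_le_sqrt hle) (by rw [Real.sq_sqrt (hy0.trans hle), Real.sq_sqrt hy0, hsum])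
  exact ⟨θ, hθ, a, b, ha, hb, hab, hcos ▸ hxa, hsin ▸ hyb⟩

theorem exists_cos_sin_orthonormal_of_sum_sq_eq_ofReal [Nontrivial ι] {u : ι → ℂ} {r : ℝ}
    (hu : ∑ i, ‖u i‖ ^ 2 = 1) (hr : 0 ≤ r) (hS : ∑ i, u i ^ 2 = r) :
    ∃ θ ∈ Set.Icc 0 (Real.pi / 4), ∃ a b : ι → ℝ, a ⬝ᵥ a = 1 ∧ b ⬝ᵥ b = 1 ∧ a ⬝ᵥ b = 0 ∧
      u = fun i => a i * Real.cos θ + b i * (Complex.I * Real.sin θ) := by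
  have hre := congrArg Complex.re hS
  have him := congrArg Complex.im hS
  rw [Complex.re_sum_sq_eq_dotProduct, Complex.ofReal_re] at hre
  rw [Complex.im_sum_sq_eq_dotProduct, Complex.ofReal_im, mul_eq_zero_iff_left two_ne_zero] at him
  obtain ⟨θ, hθ, a, b, ha, hb, hab, hx, hy⟩ := exists_cos_sin_orthonormal
    (Complex.sum_norm_sq_eq_dotProduct u ▸ hu) (by linarith) him
  refine ⟨θ, hθ, a, b, ha, hb, hab, funext fun i => Complex.ext ?_ ?_⟩
  · simpa [-Complex.ofReal_cos, mul_comm] using congrFun hx i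
  · simpa [-Complex.ofReal_sin, mul_comm] using congrFun hy i

end DotProduct

def orthonormalFrame {R : Type*} [CommRing R] (a b : Fin 3 → R) : Matrix (Fin 3) (Fin 3) R :=
  (of ![a, b, a ⨯₃ b])ᵀ

section OrthonormalFrame

variable {R : Type*} [CommRing R] {a b : Fin 3 → R}

theorem orthonormalFrame_transpose_mul (ha : a ⬝ᵥ a = 1) (hb : b ⬝ᵥ b = 1)
    (hab : a ⬝ᵥ b = 0) : (orthonormalFrame a b)ᵀ * orthonormalFrame a b = 1 := by
  have hba : b ⬝ᵥ a = 0 := by rwa [dotProduct_comm]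
  have hca : (a ⨯₃ b) ⬝ᵥ a = 0 := by rw [dotProduct_comm, dot_self_cross]
  have hcb : (a ⨯₃ b) ⬝ᵥ b = 0 := by rw [dotProduct_comm, dot_cross_self]
  have hcc : (a ⨯₃ b) ⬝ᵥ (a ⨯₃ b) = 1 := by
    rw [cross_dot_cross, ha, hb, hab, hba]; ring
  ext i j
  rw [orthonormalFrame, transpose_transpose, mul_apply]
  fin_cases i <;> fin_cases j <;>
    simp [← dotProduct.eq_1, ha, hb, hab, hba, hca, hcb, hcc, dot_self_cross, dot_cross_self]

theorem det_orthonormalFrame (ha : a ⬝ᵥ a = 1) (hb : b ⬝ᵥ b = 1) (hab : a ⬝ᵥ b = 0) :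
    (orthonormalFrame a b).det = 1 := by
  calc (orthonormalFrame a b).det = a ⬝ᵥ b ⨯₃ (a ⨯₃ b) :=
        (det_transpose _).trans (triple_product_eq_det a b _).symm
    _ = (a ⨯₃ b) ⬝ᵥ (a ⨯₃ b) := by rw [triple_product_permutation, triple_product_permutation]
    _ = 1 := by rw [cross_dot_cross, ha, hb, hab]; ring

end OrthonormalFrame

theorem map_ofReal_orthonormalFrame_mulVec (a b : Fin 3 → ℝ) (p q : ℂ) :
    (orthonormalFrame a b).map Complex.ofReal *ᵥ ![p, q, 0] = fun i => a i * p + b i * q := by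
  ext i
  simp [orthonormalFrame, mulVec, dotProduct, Fin.sum_univ_three]

theorem vecMulVec_star_cos_sin_eq_Atheta (θ : ℝ) :
    vecMulVec ![(Real.cos θ : ℂ), Complex.I * Real.sin θ, 0]
      (star ![(Real.cos θ : ℂ), Complex.I * Real.sin θ, 0]) = Atheta θ := by
  ext i j
  fin_cases i <;> fin_cases j <;> simp [Atheta, vecMulVec_apply, Complex.ext_iff, sq, mul_comm]

/-- Every rank-one matrix `v v†` with `v` a unit vector in `ℂ³` can be brought to the
normal form `A_θ`, `θ ∈ [0, π/4]`, by conjugation with a rotation `G ∈ SO(3)`. -/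
theorem rankOne_eq_rotation_conj_normal_form (v : Fin 3 → ℂ)
    (hv : ∑ i, ‖v i‖ ^ 2 = 1) :
    ∃ (G : Matrix (Fin 3) (Fin 3) ℝ) (θ : ℝ), G * Gᵀ = 1 ∧ G.det = 1 ∧
      θ ∈ Set.Icc 0 (Real.pi / 4) ∧
      Matrix.vecMulVec v (star v) =
        (G.map Complex.ofReal) * Atheta θ * (G.map Complex.ofReal)ᵀ := by
  obtain ⟨z, hz, hzS⟩ := Complex.exists_norm_eq_one_sq_mul_eq_norm (∑ i, v i ^ 2)
  have hzz : z * star z = 1 := by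
    rw [Complex.star_def, Complex.mul_conj, Complex.normSq_eq_norm_sq, hz]; norm_num
  have hu : ∑ i, ‖(z • v) i‖ ^ 2 = 1 := by simpa [hz] using hv
  have hS : ∑ i, (z • v) i ^ 2 = ‖∑ i, v i ^ 2‖ := by
    simp only [Pi.smul_apply, smul_eq_mul, mul_pow, ← Finset.mul_sum, hzS]
  obtain ⟨θ, hθ, a, b, ha, hb, hab, hzv⟩ :=
    exists_cos_sin_orthonormal_of_sum_sq_eq_ofReal hu (norm_nonneg _) hS
  refine ⟨orthonormalFrame a b, θ, mul_eq_one_comm.mp (orthonormalFrame_transpose_mul ha hb hab),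
    det_orthonormalFrame ha hb hab, hθ, ?_⟩
  rw [← vecMulVec_smul_star_smul hzz, hzv, ← map_ofReal_orthonormalFrame_mulVec,
    vecMulVec_mulVec_star, vecMulVec_star_cos_sin_eq_Atheta,
    ← conjTranspose_map _ fun x => (Complex.conj_ofReal x).symm,
    conjTranspose_eq_transpose_of_trivial, transpose_map]
end

section
/- Let A be a complex unital Banach algebra, let A₁, …, Aₘ ∈ A, and let t ∈ ℝ. Then the sequence n ↦ ((∏_{j=1}^m exp((t/(2n))·Aⱼ)) · (∏_{j=m}^{1} exp((t/(2n))·Aⱼ)))^n (the second product taken in reverse order) converges, as n → ∞ along the natural numbers, to exp(t·Σ_{j=1}^m Aⱼ). -/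
/-!
The `n`-th Strang factor `u n` is a smooth function of `s = t / (2n)` equal to `1` with derivative
`2 ∑ Aⱼ` at `s = 0`, so `n (u n - 1) → t ∑ Aⱼ`. It then suffices to show that `n (u n - 1) → x`
forces `u n ^ n → exp x`. Compare `u n` with `b n = exp (x / n)`, for which `b n ^ n = exp x` and
`n (b n - 1) → x`: the telescoping bound `‖aⁿ - bⁿ‖ ≤ n Mⁿ⁻¹ ‖a - b‖` with
`M = exp ((‖x‖ + 1) / n)` gives `‖u n ^ n - exp x‖ ≤ e^{‖x‖+1} ‖n (u n - b n)‖ → 0`.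
The bound `‖exp y‖ ≤ exp ‖y‖` behind this needs `‖1‖ = 1`, which is arranged by passing to the
left regular representation `A → (A →L A)`.
-/

open NormedSpace Filter Topology

theorem norm_pow_sub_pow_le {R : Type*} [SeminormedRing R] {a b : R} {M : ℝ} (ha : ‖a‖ ≤ M)
    (hb : ‖b‖ ≤ M) (n : ℕ) : ‖a ^ n - b ^ n‖ ≤ n * M ^ (n - 1) * ‖a - b‖ := by
  rcases Nat.eq_zero_or_pos n with rfl | hn
  · simp
  induction n, hn using Nat.le_induction with
  | base => simp
  | succ n hn ih =>
    have ha_pow : ‖a ^ n‖ ≤ M ^ n :=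
      (norm_pow_le' a hn).trans (pow_le_pow_left₀ (norm_nonneg a) ha n)
    calc ‖a ^ (n + 1) - b ^ (n + 1)‖ = ‖a ^ n * (a - b) + (a ^ n - b ^ n) * b‖ := by
          congr 1; noncomm_ring
      _ ≤ ‖a ^ n‖ * ‖a - b‖ + ‖a ^ n - b ^ n‖ * ‖b‖ :=
          norm_add_le_of_le (norm_mul_le _ _) (norm_mul_le _ _)
      _ ≤ M ^ n * ‖a - b‖ + n * M ^ (n - 1) * ‖a - b‖ * M := by
          gcongr
          exact (norm_nonneg _).trans ih
      _ = (n + 1 : ℕ) * M ^ (n + 1 - 1) * ‖a - b‖ := by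
          obtain ⟨k, rfl⟩ := Nat.exists_eq_add_of_le' hn
          push_cast
          ring

theorem NormedSpace.norm_exp_le_exp_norm {A : Type*} [NormedRing A] [NormedAlgebra ℚ A]
    [NormOneClass A] (x : A) : ‖exp x‖ ≤ Real.exp ‖x‖ := by
  rw [exp_eq_tsum ℚ, Real.exp_eq_exp_ℝ, exp_eq_tsum_div]
  refine (norm_tsum_le_tsum_norm (norm_expSeries_summable' x)).trans <|
    (norm_expSeries_summable' x).tsum_le_tsum (fun n => ?_) (Real.summable_pow_div_factorial ‖x‖)
  rw [norm_smul, div_eq_inv_mul]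
  simp only [norm_inv, ← Rat.norm_cast_real, Rat.cast_natCast, RCLike.norm_natCast]
  gcongr
  exact norm_pow_le x n

theorem HasDerivAt.tendsto_natCast_smul_sub {𝕜 F : Type*} [RCLike 𝕜] [NormedAddCommGroup F]
    [NormedSpace 𝕜 F] {g : 𝕜 → F} {d : F} (hg : HasDerivAt g d 0) (c : 𝕜) :
    Tendsto (fun n : ℕ => (n : 𝕜) • (g (c / n) - g 0)) atTop (𝓝 (c • d)) := by
  rcases eq_or_ne c 0 with rfl | hc
  · simp
  have hcn : Tendsto (fun n : ℕ => c / n) atTop (𝓝[≠] 0) := by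
    refine tendsto_nhdsWithin_iff.2 ⟨?_, ?_⟩
    · simpa [div_eq_mul_inv] using (tendsto_inv_atTop_nhds_zero_nat (𝕜 := 𝕜)).const_mul c
    · filter_upwards [eventually_ne_atTop 0] with n hn
      exact div_ne_zero hc (Nat.cast_ne_zero.2 hn)
  refine ((hasDerivAt_iff_tendsto_slope.1 hg).comp hcn |>.const_smul c).congr' ?_
  filter_upwards [eventually_ne_atTop 0] with n hn
  have hn' : (n : 𝕜) ≠ 0 := Nat.cast_ne_zero.2 hn
  simp only [Function.comp_apply, slope_def_module, sub_zero, smul_smul]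
  field_simp

theorem norm_pow_sub_pow_le_of_norm_le_exp {R : Type*} [SeminormedRing R] {a b : R} {r : ℝ}
    {n : ℕ} (hr : 0 ≤ r) (hb : ‖b‖ ≤ Real.exp (r / n)) (hab : ‖a - b‖ ≤ 1 / n) :
    ‖a ^ n - b ^ n‖ ≤ Real.exp (r + 1) * (n * ‖a - b‖) := by
  set M := Real.exp ((r + 1) / n)
  have hbM : ‖b‖ ≤ M := hb.trans (Real.exp_le_exp.2 (by gcongr; linarith))
  have haM : ‖a‖ ≤ M := calc
    ‖a‖ ≤ ‖b‖ + ‖a - b‖ := norm_le_norm_add_norm_sub' a b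
    _ ≤ Real.exp (r / n) + 1 / n := add_le_add hb hab
    _ ≤ Real.exp (r / n) * Real.exp (1 / n) := by
        have h₁ := Real.add_one_le_exp (1 / n)
        have h₂ := Real.one_le_exp (by positivity : 0 ≤ r / n)
        nlinarith [mul_le_mul_of_nonneg_left h₁ (Real.exp_pos (r / n)).le,
          mul_le_mul_of_nonneg_right h₂ (by positivity : (0 : ℝ) ≤ 1 / n)]
    _ = M := by rw [← Real.exp_add, ← add_div]
  have hMpow : M ^ (n - 1) ≤ Real.exp (r + 1) := by
    rw [← Real.exp_nat_mul, Real.exp_le_exp]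
    calc ((n - 1 : ℕ) : ℝ) * ((r + 1) / n) ≤ n * ((r + 1) / n) := by gcongr; omega
      _ ≤ r + 1 := by
          rcases eq_or_ne n 0 with rfl | hn
          · simp only [Nat.cast_zero, zero_mul]
            linarith
          · rw [mul_div_cancel₀ _ (Nat.cast_ne_zero.2 hn)]
  calc ‖a ^ n - b ^ n‖ ≤ n * M ^ (n - 1) * ‖a - b‖ := norm_pow_sub_pow_le haM hbM n
    _ = M ^ (n - 1) * (n * ‖a - b‖) := by ring
    _ ≤ Real.exp (r + 1) * (n * ‖a - b‖) := by gcongr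

theorem tendsto_pow_of_tendsto_natCast_smul_sub_one' {𝕂 A : Type*} [RCLike 𝕂] [NormedRing A]
    [NormedAlgebra 𝕂 A] [NormOneClass A] [CompleteSpace A] {u : ℕ → A} {x : A}
    (h : Tendsto (fun n : ℕ => (n : 𝕂) • (u n - 1)) atTop (𝓝 x)) :
    Tendsto (fun n => u n ^ n) atTop (𝓝 (exp x)) := by
  let : NormedAlgebra ℚ A := NormedAlgebra.restrictScalars ℚ 𝕂 A
  set b : ℕ → A := fun n => exp ((n : 𝕂)⁻¹ • x)
  have hb : Tendsto (fun n : ℕ => (n : 𝕂) • (b n - 1)) atTop (𝓝 x) := by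
    simpa [b] using (hasDerivAt_exp_smul_const (𝕂 := 𝕂) x 0).tendsto_natCast_smul_sub 1
  set ε : ℕ → ℝ := fun n => ‖(n : 𝕂) • (u n - b n)‖
  have hε : Tendsto ε atTop (𝓝 0) := by
    simpa [ε, smul_sub] using (h.sub hb).norm
  have hbound : ∀ᶠ n in atTop, ‖u n ^ n - exp x‖ ≤ Real.exp (‖x‖ + 1) * ε n := by
    filter_upwards [hε.eventually (eventually_le_nhds one_pos), eventually_ne_atTop 0]
      with n hεn hn
    have hbn : b n ^ n = exp x := by
      rw [← exp_nsmul, ← Nat.cast_smul_eq_nsmul 𝕂, smul_smul,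
        mul_inv_cancel₀ (Nat.cast_ne_zero.2 hn), one_smul]
    have hε_eq : ε n = n * ‖u n - b n‖ := by simp [ε, norm_smul]
    rw [← hbn, hε_eq]
    refine norm_pow_sub_pow_le_of_norm_le_exp (norm_nonneg x) ?_ ?_
    · refine (norm_exp_le_exp_norm _).trans (Real.exp_le_exp.2 ?_)
      simp [norm_smul, div_eq_inv_mul]
    · rw [le_div_iff₀ (by positivity)]
      linarith
  rw [tendsto_iff_norm_sub_tendsto_zero]
  exact squeeze_zero' (.of_forall fun n => norm_nonneg _) hbound
    (by simpa using hε.const_mul (Real.exp (‖x‖ + 1)))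

noncomputable def ContinuousLinearMap.mulLeftAlgHom (𝕂 A : Type*) [NontriviallyNormedField 𝕂]
    [NormedRing A] [NormedAlgebra 𝕂 A] : A →ₐ[𝕂] (A →L[𝕂] A) :=
  AlgHom.ofLinearMap (ContinuousLinearMap.mul 𝕂 A).toLinearMap
    (ContinuousLinearMap.ext one_mul) (fun a b => ContinuousLinearMap.ext (mul_assoc a b))

@[simp]
theorem ContinuousLinearMap.mulLeftAlgHom_apply {𝕂 A : Type*} [NontriviallyNormedField 𝕂]
    [NormedRing A] [NormedAlgebra 𝕂 A] (a b : A) : mulLeftAlgHom 𝕂 A a b = a * b :=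
  rfl

theorem tendsto_pow_of_tendsto_natCast_smul_sub_one {𝕂 A : Type*} [RCLike 𝕂] [NormedRing A]
    [NormedAlgebra 𝕂 A] [CompleteSpace A] {u : ℕ → A} {x : A}
    (h : Tendsto (fun n : ℕ => (n : 𝕂) • (u n - 1)) atTop (𝓝 x)) :
    Tendsto (fun n => u n ^ n) atTop (𝓝 (exp x)) := by
  rcases subsingleton_or_nontrivial A with hA | hA
  · exact tendsto_const_nhds.congr fun n => Subsingleton.elim _ _
  let : NormedAlgebra ℚ A := NormedAlgebra.restrictScalars ℚ 𝕂 A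
  let : NormedAlgebra ℚ (A →L[𝕂] A) := NormedAlgebra.restrictScalars ℚ 𝕂 (A →L[𝕂] A)
  let ψ := ContinuousLinearMap.mulLeftAlgHom 𝕂 A
  have hψ : Continuous ψ := (ContinuousLinearMap.mul 𝕂 A).continuous
  have hψu : Tendsto (fun n : ℕ => (n : 𝕂) • (ψ (u n) - 1)) atTop (𝓝 (ψ x)) := by
    refine ((hψ.tendsto x).comp h).congr fun n => ?_
    rw [Function.comp_apply, map_smul, map_sub, map_one]
  -- `A →L[𝕂] A` is a `NormOneClass` because `A` is nontrivial.
  have := ((ContinuousLinearMap.apply 𝕂 A 1).continuous.tendsto _).comp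
    (tendsto_pow_of_tendsto_natCast_smul_sub_one' hψu)
  have hpow (n : ℕ) : (ψ (u n) ^ n) 1 = u n ^ n := by
    rw [← map_pow, ContinuousLinearMap.mulLeftAlgHom_apply, mul_one]
  have hexp : exp (ψ x) 1 = exp x := by
    rw [← map_exp ψ hψ, ContinuousLinearMap.mulLeftAlgHom_apply, mul_one]
  simpa only [Function.comp_def, ContinuousLinearMap.apply_apply, hpow, hexp] using this

section StrangProduct

variable {𝕂 A : Type*} [RCLike 𝕂] [NormedRing A] [NormedAlgebra 𝕂 A]

noncomputable def strangProduct (l : List A) (z : 𝕂) : A :=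
  (l.map fun a => exp (z • a)).prod * (l.map fun a => exp (z • a)).reverse.prod

theorem strangProduct_zero (l : List A) : strangProduct l (0 : 𝕂) = 1 := by
  simp [strangProduct]

variable [CompleteSpace A]

theorem hasDerivAt_list_prod_exp_smul (l : List A) :
    HasDerivAt (fun z : 𝕂 => (l.map fun a => exp (z • a)).prod) l.sum 0 := by
  induction l with
  | nil => simpa using hasDerivAt_const (0 : 𝕂) (1 : A)
  | cons a l ih =>
    have ha : HasDerivAt (fun z : 𝕂 => exp (z • a)) a 0 := by
      simpa using hasDerivAt_exp_smul_const (𝕂 := 𝕂) a 0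
    simpa [Pi.mul_def] using ha.mul ih

theorem hasDerivAt_strangProduct (l : List A) :
    HasDerivAt (strangProduct l) ((2 : 𝕂) • l.sum) (0 : 𝕂) := by
  have hrev := hasDerivAt_list_prod_exp_smul (𝕂 := 𝕂) l.reverse
  simp only [List.map_reverse, List.sum_reverse] at hrev
  rw [two_smul]
  exact (hasDerivAt_list_prod_exp_smul l).mul hrev |>.congr_deriv (by simp)

end StrangProduct

/-- The symmetrized (Strang-split) Lie–Trotter product formula in a complex unital Banach
algebra: `((∏_{j=1}^m exp((t/2n)Aⱼ))·(∏_{j=m}^{1} exp((t/2n)Aⱼ)))^n → exp(t·ΣAⱼ)`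
as `n → ∞`. -/
theorem strang_trotter_product_formula {A : Type*} [NormedRing A] [NormedAlgebra ℂ A]
    [CompleteSpace A] (m : ℕ) (L : ℕ → A) (t : ℝ) :
    Filter.Tendsto
      (fun n : ℕ =>
        ((((List.range m).map fun j =>
              exp (((t / (2 * (n : ℝ)) : ℝ) : ℂ) • L (j + 1))).prod) *
          (((List.range m).map fun j =>
              exp (((t / (2 * (n : ℝ)) : ℝ) : ℂ) • L (j + 1))).reverse.prod)) ^ n)
      Filter.atTop
      (nhds (exp (((t : ℝ) : ℂ) • ∑ j ∈ Finset.range m, L (j + 1)))) := by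
  set l := (List.range m).map fun j => L (j + 1)
  have hsum : l.sum = ∑ j ∈ Finset.range m, L (j + 1) := rfl
  have hderiv := (hasDerivAt_strangProduct (𝕂 := ℂ) l).tendsto_natCast_smul_sub ((t : ℂ) / 2)
  rw [strangProduct_zero, smul_smul, div_mul_cancel₀ _ two_ne_zero, hsum] at hderiv
  refine (tendsto_pow_of_tendsto_natCast_smul_sub_one hderiv).congr fun n => ?_
  have hcoef : (t : ℂ) / 2 / n = ((t / (2 * (n : ℝ)) : ℝ) : ℂ) := by push_cast; ring
  simp only [strangProduct, l, List.map_map, Function.comp_def, hcoef]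
end
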